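/- arXiv:2408.03912 — 4 statements merged into one kernel-verified Lean document; each statement's English description precedes it below -/
import Mathlib

section
/- Let V : ℝ≥0 → ℝ be a nonnegative continuously differentiable function satisfying the differential inequality V'(t) ≤ -γ₁ V(t)^(1 - p/q) - γ₂ V(t)^(1 + p/q) whenever V(t) > 0, where γ₁, γ₂ > 0, p is a positive even integer, q is a positive odd integer, and p < q. Then there exists a settling time T with T ≤ πq/(2p√(γ₁γ₂)) such that V(t) = 0 for all t ≥ T, and this bound is independent of V(0). -/
/-- Fixed-time stability comparison lemma (Lemma 1, Zuo). -/
theorem stmt_0 (p q : ℕ) (hp : 0 < p) (hpe : Even p) (hqo : Odd q) (hpq : p < q)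
    (γ₁ γ₂ : ℝ) (hγ₁ : 0 < γ₁) (hγ₂ : 0 < γ₂)
    (V V' : ℝ → ℝ)
    (hVnonneg : ∀ t, 0 ≤ t → 0 ≤ V t)
    (hVderiv : ∀ t, 0 ≤ t → HasDerivAt V (V' t) t)
    (hV'cont : ContinuousOn V' (Set.Ici (0 : ℝ)))
    (hineq : ∀ t, 0 ≤ t → 0 < V t →
      V' t ≤ -γ₁ * V t ^ ((1 : ℝ) - (p : ℝ) / q) - γ₂ * V t ^ ((1 : ℝ) + (p : ℝ) / q)) :
    ∃ T : ℝ, 0 ≤ T ∧ T ≤ Real.pi * q / (2 * p * Real.sqrt (γ₁ * γ₂)) ∧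
      ∀ t, T ≤ t → V t = 0 := by
  have hq : 0 < q := hqo.pos
  have hpR : (0:ℝ) < p := by exact_mod_cast hp
  have hqR : (0:ℝ) < q := by exact_mod_cast hq
  set k : ℝ := (p:ℝ)/q with hk
  have hk0 : 0 < k := div_pos hpR hqR
  have hγ : 0 < γ₁ * γ₂ := mul_pos hγ₁ hγ₂
  have hs : 0 < Real.sqrt (γ₁ * γ₂) := Real.sqrt_pos.2 hγ
  set T : ℝ := Real.pi * q / (2 * p * Real.sqrt (γ₁ * γ₂)) with hTdef
  have hT0 : 0 < T :=
    div_pos (mul_pos Real.pi_pos hqR) (mul_pos (mul_pos two_pos hpR) hs)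
  -- derivative of V is nonpositive on Ioi 0
  have hderiv_nonpos : ∀ t : ℝ, 0 < t → V' t ≤ 0 := by
    intro t ht
    have ht0 : (0:ℝ) ≤ t := ht.le
    rcases lt_or_eq_of_le (hVnonneg t ht0) with hpos | hzero
    · have h := hineq t ht0 hpos
      have h1 : 0 < V t ^ ((1:ℝ) - k) := Real.rpow_pos_of_pos hpos _
      have h2 : 0 < V t ^ ((1:ℝ) + k) := Real.rpow_pos_of_pos hpos _
      nlinarith
    · have hmin : IsLocalMin V t := by
        filter_upwards [Ioi_mem_nhds ht] with y hy
        rw [← hzero]; exact hVnonneg y hy.le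
      exact le_of_eq (hmin.hasDerivAt_eq_zero (hVderiv t ht0))
  have hVcont : ContinuousOn V (Set.Ici (0:ℝ)) := fun t ht =>
    ((hVderiv t ht).continuousAt).continuousWithinAt
  have hanti : AntitoneOn V (Set.Ici (0:ℝ)) := by
    apply antitoneOn_of_deriv_nonpos (convex_Ici 0) hVcont
    · intro t ht
      rw [interior_Ici] at ht
      exact ((hVderiv t ht.le).differentiableAt).differentiableWithinAt
    · intro t ht
      rw [interior_Ici] at ht
      rw [(hVderiv t ht.le).deriv]
      exact hderiv_nonpos t ht
  -- V T = 0
  have hVT : V T = 0 := by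
    by_contra h
    have hVTpos : 0 < V T := lt_of_le_of_ne (hVnonneg T hT0.le) (Ne.symm h)
    have hVpos : ∀ t ∈ Set.Icc (0:ℝ) T, 0 < V t := fun t ht =>
      lt_of_lt_of_le hVTpos (hanti ht.1 (Set.mem_Ici.2 hT0.le) ht.2)
    set c : ℝ := Real.sqrt (γ₂ / γ₁) with hc
    have hcpos : 0 < c := Real.sqrt_pos.2 (div_pos hγ₂ hγ₁)
    have hcsq : c ^ 2 = γ₂ / γ₁ := Real.sq_sqrt (div_pos hγ₂ hγ₁).le
    have hcγ : c * γ₁ = Real.sqrt (γ₁ * γ₂) := by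
      rw [hc, Real.sqrt_div hγ₂.le, Real.sqrt_mul hγ₁.le]
      have h1 : Real.sqrt γ₁ > 0 := Real.sqrt_pos.2 hγ₁
      have h2 : Real.sqrt γ₁ * Real.sqrt γ₁ = γ₁ := Real.mul_self_sqrt hγ₁.le
      field_simp
      nlinarith [Real.sqrt_pos.2 hγ₂]
    set C : ℝ := k * Real.sqrt (γ₁ * γ₂) with hC
    have hCpos : 0 < C := mul_pos hk0 hs
    set G : ℝ → ℝ := fun t => Real.arctan (c * V t ^ k) + C * t with hG
    -- derivative of G
    have hGderiv : ∀ t, 0 ≤ t → 0 < V t →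
        HasDerivAt G ((1/(1 + (c * V t ^ k)^2)) * (c * (k * V t ^ (k-1) * V' t)) + C * 1) t := by
      intro t ht0 hv
      have h1 : HasDerivAt V (V' t) t := hVderiv t ht0
      have h2 : HasDerivAt (fun s => V s ^ k) (k * V t ^ (k-1) * V' t) t := by
        have := h1.rpow_const (p := k) (Or.inl hv.ne')
        convert this using 1; ring
      have h3 : HasDerivAt (fun s => c * V s ^ k) (c * (k * V t ^ (k-1) * V' t)) t :=
        h2.const_mul c
      have h4 := (Real.hasDerivAt_arctan (c * V t ^ k)).comp t h3
      exact h4.add ((hasDerivAt_id t).const_mul C)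
    -- derivative bound
    have hGbound : ∀ t, 0 ≤ t → 0 < V t →
        (1/(1 + (c * V t ^ k)^2)) * (c * (k * V t ^ (k-1) * V' t)) + C * 1 ≤ 0 := by
      intro t ht0 hv
      set v : ℝ := V t with hvdef
      have hV' := hineq t ht0 hv
      have hvk1 : 0 < v ^ (k-1) := Real.rpow_pos_of_pos hv _
      have e1 : v ^ (k-1) * v ^ ((1:ℝ) - k) = 1 := by
        rw [← Real.rpow_add hv]; norm_num
      have e2 : v ^ (k-1) * v ^ ((1:ℝ) + k) = v ^ (2*k) := by
        rw [← Real.rpow_add hv]; ring_nf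
      have e3 : (c * v ^ k)^2 = (γ₂/γ₁) * v ^ (2*k) := by
        rw [mul_pow, hcsq, ← Real.rpow_natCast (v ^ k) 2, ← Real.rpow_mul hv.le]
        ring_nf
      set w : ℝ := v ^ (2*k) with hw
      have hwpos : 0 < w := Real.rpow_pos_of_pos hv _
      have hA : 0 < 1 + (c * v ^ k)^2 := by positivity
      -- key: c * k * v^(k-1) * V' t ≤ -C * (1 + (c v^k)^2)
      have key : c * (k * v ^ (k-1) * V' t) ≤ -C * (1 + (c * v ^ k)^2) := by
        have hb : 0 ≤ c * (k * v ^ (k-1)) := by positivity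
        have step : c * (k * v ^ (k-1) * V' t) ≤
            c * (k * v ^ (k-1) * (-γ₁ * v ^ ((1:ℝ) - k) - γ₂ * v ^ ((1:ℝ) + k))) := by
          have := mul_le_mul_of_nonneg_left hV' (by positivity : (0:ℝ) ≤ c * (k * v ^ (k-1)))
          calc c * (k * v ^ (k-1) * V' t) = (c * (k * v ^ (k-1))) * V' t := by ring
            _ ≤ (c * (k * v ^ (k-1))) * (-γ₁ * v ^ ((1:ℝ) - k) - γ₂ * v ^ ((1:ℝ) + k)) := this
            _ = c * (k * v ^ (k-1) * (-γ₁ * v ^ ((1:ℝ) - k) - γ₂ * v ^ ((1:ℝ) + k))) := by ring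
        refine step.trans (le_of_eq ?_)
        have expand : c * (k * v ^ (k-1) * (-γ₁ * v ^ ((1:ℝ) - k) - γ₂ * v ^ ((1:ℝ) + k)))
            = -(c * k) * (γ₁ * (v ^ (k-1) * v ^ ((1:ℝ) - k)) + γ₂ * (v ^ (k-1) * v ^ ((1:ℝ) + k))) := by
          ring
        rw [expand, e1, e2, e3]
        rw [hC, ← hcγ]
        field_simp
      calc (1/(1 + (c * v ^ k)^2)) * (c * (k * v ^ (k-1) * V' t)) + C * 1
          ≤ (1/(1 + (c * v ^ k)^2)) * (-C * (1 + (c * v ^ k)^2)) + C * 1 := by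
            have := mul_le_mul_of_nonneg_left key (le_of_lt (by positivity : (0:ℝ) < 1/(1 + (c * v ^ k)^2)))
            linarith
        _ = 0 := by field_simp; ring
    -- G is antitone on Icc 0 T
    have hGanti : AntitoneOn G (Set.Icc 0 T) := by
      apply antitoneOn_of_deriv_nonpos (convex_Icc 0 T)
      · intro t ht
        exact ((hGderiv t ht.1 (hVpos t ht)).continuousAt).continuousWithinAt
      · intro t ht
        rw [interior_Icc] at ht
        have ht' : t ∈ Set.Icc (0:ℝ) T := ⟨ht.1.le, ht.2.le⟩
        exact ((hGderiv t ht'.1 (hVpos t ht')).differentiableAt).differentiableWithinAt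
      · intro t ht
        rw [interior_Icc] at ht
        have ht' : t ∈ Set.Icc (0:ℝ) T := ⟨ht.1.le, ht.2.le⟩
        rw [(hGderiv t ht'.1 (hVpos t ht')).deriv]
        exact hGbound t ht'.1 (hVpos t ht')
    have hGT : G T ≤ G 0 :=
      hGanti (Set.left_mem_Icc.2 hT0.le) (Set.right_mem_Icc.2 hT0.le) hT0.le
    have hCT : C * T = Real.pi / 2 := by
      rw [hC, hTdef, hk]
      field_simp
    have harctan0 : Real.arctan (c * V 0 ^ k) < Real.pi / 2 := Real.arctan_lt_pi_div_two _
    have harctanT : 0 < Real.arctan (c * V T ^ k) :=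
      by
      have := Real.arctan_strictMono (show (0:ℝ) < c * V T ^ k by positivity)
      rwa [Real.arctan_zero] at this
    have hG0 : G 0 = Real.arctan (c * V 0 ^ k) := by simp [hG]
    have hGTval : G T = Real.arctan (c * V T ^ k) + Real.pi / 2 := by
      rw [hG]; simp only [← hCT]
    rw [hG0, hGTval] at hGT
    linarith
  refine ⟨T, hT0.le, le_refl _, fun t ht => ?_⟩
  have h1 : V t ≤ V T := hanti (Set.mem_Ici.2 hT0.le) (Set.mem_Ici.2 (hT0.le.trans ht)) ht
  have h2 : 0 ≤ V t := hVnonneg t (hT0.le.trans ht)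
  linarith [hVT ▸ h1]
end

section
/- Let f : ℝ × ℝ≥0 → ℝ be C² with f_xx(x,t) ≥ m > 0 for all (x,t), let A ≠ 0 and b : ℝ≥0 → ℝ be C¹. Suppose x*(t), λ*(t) are C¹ curves satisfying the KKT conditions f_x(x*(t), t) + A λ*(t) = 0 and A x*(t) = b(t) for all t. Then λ̇*(t) = -[A f_xx(x*(t),t)^{-1} A]^{-1} ( A f_xx(x*(t),t)^{-1} f_xt(x*(t),t) + ḃ(t) ) and ẋ*(t) = -f_xx(x*(t),t)^{-1}( A λ̇*(t) + f_xt(x*(t),t) ). -/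
/-- Derivative optimality conditions for the single-agent time-varying KKT system. -/
theorem stmt_9 (f : ℝ → ℝ → ℝ)
    (hf : ContDiff ℝ 2 (fun p : ℝ × ℝ => f p.1 p.2))
    (fx fxx fxt : ℝ → ℝ → ℝ)
    (hfx : ∀ x t, HasDerivAt (fun x' => f x' t) (fx x t) x)
    (hfxx : ∀ x t, HasDerivAt (fun x' => fx x' t) (fxx x t) x)
    (hfxt : ∀ x t, HasDerivAt (fun t' => fx x t') (fxt x t) t)
    (m : ℝ) (hm : 0 < m) (hstrong : ∀ x t, m ≤ fxx x t)
    (A : ℝ) (hA : A ≠ 0)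
    (b b' : ℝ → ℝ) (hb : ∀ t, HasDerivAt b (b' t) t)
    (xs ls xd ld : ℝ → ℝ)
    (hxs : ∀ t, HasDerivAt xs (xd t) t)
    (hls : ∀ t, HasDerivAt ls (ld t) t)
    (hKKT1 : ∀ t, 0 ≤ t → fx (xs t) t + A * ls t = 0)
    (hKKT2 : ∀ t, 0 ≤ t → A * xs t = b t) :
    ∀ t, 0 < t →
      ld t = -(A * (fxx (xs t) t)⁻¹ * A)⁻¹ *
          (A * (fxx (xs t) t)⁻¹ * fxt (xs t) t + b' t) ∧
      xd t = -(fxx (xs t) t)⁻¹ * (A * ld t + fxt (xs t) t) := by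
  intro t ht
  set F : ℝ × ℝ → ℝ := fun p => f p.1 p.2 with hF
  -- fx agrees with the partial derivative of F
  have hFd : Differentiable ℝ F := hf.differentiable (by norm_num)
  have hGeq : ∀ p : ℝ × ℝ, fx p.1 p.2 = fderiv ℝ F p (1, 0) := by
    intro p
    have h1 : HasDerivAt (fun x' => F (x', p.2)) (fderiv ℝ F p (1, 0)) p.1 := by
      have := (hFd p).hasFDerivAt.comp_hasDerivAt p.1
        ((hasDerivAt_id p.1).prodMk (hasDerivAt_const p.1 p.2))
      exact this
    exact ((hfx p.1 p.2).unique h1)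
  set G : ℝ × ℝ → ℝ := fun p => fx p.1 p.2 with hG
  have hGc : ContDiff ℝ 1 G := by
    have h : ContDiff ℝ 1 (fun p : ℝ × ℝ => fderiv ℝ F p (1, 0)) :=
      (hf.fderiv_right (by norm_num)).clm_apply contDiff_const
    have hGe : G = fun p : ℝ × ℝ => fderiv ℝ F p (1, 0) := funext fun p => hGeq p
    rw [hGe]; exact h
  have hGd : Differentiable ℝ G := hGc.differentiable (by norm_num)
  -- partial derivatives of G
  have hG1 : ∀ p : ℝ × ℝ, fderiv ℝ G p (1, 0) = fxx p.1 p.2 := by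
    intro p
    have h1 : HasDerivAt (fun x' => G (x', p.2)) (fderiv ℝ G p (1, 0)) p.1 := by
      have := (hGd p).hasFDerivAt.comp_hasDerivAt p.1
        ((hasDerivAt_id p.1).prodMk (hasDerivAt_const p.1 p.2))
      exact this
    exact h1.unique (hfxx p.1 p.2)
  have hG2 : ∀ p : ℝ × ℝ, fderiv ℝ G p (0, 1) = fxt p.1 p.2 := by
    intro p
    have h1 : HasDerivAt (fun t' => G (p.1, t')) (fderiv ℝ G p (0, 1)) p.2 := by
      have := (hGd p).hasFDerivAt.comp_hasDerivAt p.2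
        ((hasDerivAt_const p.2 p.1).prodMk (hasDerivAt_id p.2))
      exact this
    exact h1.unique (hfxt p.1 p.2)
  -- derivative of t ↦ fx (xs t) t
  have hcomp : HasDerivAt (fun s => fx (xs s) s)
      (fxx (xs t) t * xd t + fxt (xs t) t) t := by
    have hin : HasDerivAt (fun s : ℝ => (xs s, s)) (xd t, 1) t :=
      (hxs t).prodMk (hasDerivAt_id t)
    have h := ((hGd (xs t, t)).hasFDerivAt.comp (f := fun s : ℝ => (xs s, s)) t
      hin.hasFDerivAt).hasDerivAt
    have hval : fderiv ℝ G (xs t, t) (xd t, 1)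
        = fxx (xs t) t * xd t + fxt (xs t) t := by
      have : (xd t, (1 : ℝ)) = xd t • ((1 : ℝ), (0 : ℝ)) + ((0 : ℝ), (1 : ℝ)) := by
        simp
      rw [this, map_add, map_smul, hG1, hG2]
      simp [smul_eq_mul, mul_comm]
    exact h.congr_deriv (by simp [hval])
  -- differentiate KKT1
  have hnhds : ∀ᶠ s in nhds t, 0 ≤ s :=
    eventually_nhds_iff.mpr ⟨Set.Ioi 0, fun s hs => le_of_lt hs, isOpen_Ioi, ht⟩
  have heq1 : HasDerivAt (fun s => fx (xs s) s + A * ls s)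
      (fxx (xs t) t * xd t + fxt (xs t) t + A * ld t) t :=
    hcomp.add ((hls t).const_mul A)
  have hzero1 : fxx (xs t) t * xd t + fxt (xs t) t + A * ld t = 0 := by
    have hconst : HasDerivAt (fun _ : ℝ => (0 : ℝ))
        (fxx (xs t) t * xd t + fxt (xs t) t + A * ld t) t := by
      refine heq1.congr_of_eventuallyEq ?_
      filter_upwards [hnhds] with s hs
      exact (hKKT1 s hs).symm
    have := hconst.unique (hasDerivAt_const t (0 : ℝ))
    linarith [this]
  -- differentiate KKT2
  have heq2 : HasDerivAt (fun s => A * xs s) (A * xd t) t := (hxs t).const_mul A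
  have hzero2 : A * xd t = b' t := by
    have hbd : HasDerivAt b (A * xd t) t := by
      refine heq2.congr_of_eventuallyEq ?_
      filter_upwards [hnhds] with s hs
      exact (hKKT2 s hs).symm
    exact hbd.unique (hb t)
  -- algebra
  have hfxxne : fxx (xs t) t ≠ 0 := ne_of_gt (lt_of_lt_of_le hm (hstrong _ _))
  constructor
  · field_simp
    linear_combination A * hzero1 - fxx (xs t) t * hzero2
  · field_simp
    linarith [hzero1]
end

section
/- Let e : ℝ≥0 → ℝⁿ be C¹ with ½ d/dt ‖e(t)‖² ≤ -γ₁ ∑_{i=1}^n |e_i(t)|^{2 - p/q} - γ₂ ∑_{i=1}^n |e_i(t)|^{2 + p/q}, where γ₁, γ₂ > 0, p even, q odd, 0 < p < q. Then V(t) = ½‖e(t)‖² satisfies V̇ ≤ -2^{1 - p/(2q)} γ₁ V^{1 - p/(2q)} - 2^{1 + p/(2q)} n^{-p/q} γ₂ V^{1 + p/(2q)}, and hence there is T, bounded above by a constant depending only on n, p, q, γ₁, γ₂ and not on e(0), such that e(t) = 0 for all t ≥ T. -/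
open Real Finset Set

lemma norm_sq_eq_sum' {n : ℕ} (x : EuclideanSpace ℝ (Fin n)) :
    ‖x‖ ^ 2 = ∑ i, |x i| ^ 2 := by
  rw [EuclideanSpace.norm_eq, Real.sq_sqrt (by positivity)]
  simp [Real.norm_eq_abs]

lemma rpow_two_add_le' {a b β : ℝ} (ha : 0 ≤ a) (hb : 0 ≤ b) (h0 : 0 ≤ β) (h1 : β ≤ 1) :
    (a + b) ^ β ≤ a ^ β + b ^ β := by
  lift a to NNReal using ha
  lift b to NNReal using hb
  have := NNReal.rpow_add_le_add_rpow a b h0 h1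
  exact_mod_cast this

lemma rpow_sum_le' {ι : Type*} (s : Finset ι) (f : ι → ℝ) (hf : ∀ i ∈ s, 0 ≤ f i)
    {β : ℝ} (h0 : 0 < β) (h1 : β ≤ 1) :
    (∑ i ∈ s, f i) ^ β ≤ ∑ i ∈ s, f i ^ β := by
  classical
  induction s using Finset.induction with
  | empty => simp [Real.zero_rpow h0.ne']
  | insert _ _ hnot ih =>
    rename_i a s
    rw [Finset.sum_insert hnot, Finset.sum_insert hnot]
    have hfs : 0 ≤ ∑ i ∈ s, f i := Finset.sum_nonneg fun i hi => hf i (Finset.mem_insert_of_mem hi)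
    calc (f a + ∑ i ∈ s, f i) ^ β ≤ f a ^ β + (∑ i ∈ s, f i) ^ β :=
          rpow_two_add_le' (hf a (Finset.mem_insert_self a s)) hfs h0.le h1
      _ ≤ f a ^ β + ∑ i ∈ s, f i ^ β := by
          gcongr
          exact ih fun i hi => hf i (Finset.mem_insert_of_mem hi)

lemma abs_rpow_eq' {x : ℝ} (β : ℝ) : |x| ^ (2 * β) = (|x| ^ 2) ^ β := by
  rw [← Real.rpow_natCast |x| 2, ← Real.rpow_mul (abs_nonneg x)]
  norm_num

lemma two_halves_rpow' (N β : ℝ) (hN : 0 ≤ N) :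
    (2:ℝ) ^ β * ((1/2) * N) ^ β = N ^ β := by
  rw [Real.mul_rpow (by norm_num) hN, ← mul_assoc, ← Real.mul_rpow (by norm_num) (by norm_num)]
  norm_num

lemma part1a' {n : ℕ} (α : ℝ) (h0 : 0 < α) (h2 : α ≤ 1/2) (x : EuclideanSpace ℝ (Fin n)) :
    (2:ℝ) ^ ((1:ℝ) - α) * ((1/2) * ‖x‖ ^ 2) ^ ((1:ℝ) - α) ≤
      ∑ i, |x i| ^ (2 - 2 * α) := by
  have hβ0 : 0 < 1 - α := by linarith
  rw [two_halves_rpow' _ _ (by positivity), norm_sq_eq_sum']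
  have key := rpow_sum_le' Finset.univ (fun i => |x i| ^ 2)
    (fun i _ => by positivity) hβ0 (by linarith)
  refine key.trans_eq ?_
  refine Finset.sum_congr rfl fun i _ => ?_
  rw [← abs_rpow_eq']
  ring_nf

lemma part1b' {n : ℕ} (α : ℝ) (h0 : 0 < α) (h2 : α ≤ 1/2) (x : EuclideanSpace ℝ (Fin n)) :
    (2:ℝ) ^ ((1:ℝ) + α) * (n:ℝ) ^ (-(2 * α)) * ((1/2) * ‖x‖ ^ 2) ^ ((1:ℝ) + α) ≤
      ∑ i, |x i| ^ (2 + 2 * α) := by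
  have hsum : ∑ i, |x i| ^ (2 + 2*α) = ∑ i : Fin n, (|x i| ^ 2) ^ ((1:ℝ) + α) := by
    refine Finset.sum_congr rfl fun i _ => ?_
    rw [← abs_rpow_eq']
    ring_nf
  rw [hsum, mul_assoc, mul_comm ((n:ℝ) ^ (-(2*α))), ← mul_assoc,
    two_halves_rpow' _ _ (by positivity), norm_sq_eq_sum']
  rcases Nat.eq_zero_or_pos n with hn | hn
  · subst hn
    simp [Real.zero_rpow (show (1:ℝ) + α ≠ 0 by linarith)]
  · have hn' : (1:ℝ) ≤ (n:ℝ) := by exact_mod_cast hn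
    have key := Real.rpow_sum_le_const_mul_sum_rpow_of_nonneg Finset.univ
      (f := fun i : Fin n => |x i| ^ 2) (p := (1:ℝ) + α) (by linarith) (fun i _ => by positivity)
    simp only [Finset.card_univ, Fintype.card_fin] at key
    have hS : 0 ≤ ∑ i : Fin n, (|x i| ^ 2) ^ ((1:ℝ) + α) :=
      Finset.sum_nonneg fun i _ => Real.rpow_nonneg (by positivity) _
    calc (∑ i, |x i| ^ 2) ^ ((1:ℝ) + α) * (n:ℝ) ^ (-(2 * α))
        ≤ (n:ℝ) ^ ((1:ℝ) + α - 1) * (∑ i : Fin n, (|x i| ^ 2) ^ ((1:ℝ) + α)) * (n:ℝ) ^ (-(2*α)) := by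
          have hp : (0:ℝ) ≤ (n:ℝ) ^ (-(2*α)) := Real.rpow_nonneg (by positivity) _
          exact mul_le_mul_of_nonneg_right key hp
      _ = (n:ℝ) ^ ((1:ℝ) + α - 1 + -(2*α)) * (∑ i : Fin n, (|x i| ^ 2) ^ ((1:ℝ) + α)) := by
          rw [mul_right_comm, ← Real.rpow_add (by exact_mod_cast hn)]
      _ ≤ 1 * (∑ i : Fin n, (|x i| ^ 2) ^ ((1:ℝ) + α)) := by
          have : (n:ℝ) ^ ((1:ℝ) + α - 1 + -(2*α)) ≤ 1 :=
            Real.rpow_le_one_of_one_le_of_nonpos hn' (by linarith)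
          exact mul_le_mul_of_nonneg_right this hS
      _ = _ := one_mul _

lemma fixedTime (α c₁ c₂ : ℝ) (hα : 0 < α) (hc₁ : 0 < c₁) (hc₂ : 0 < c₂)
    (V W : ℝ → ℝ) (hd : ∀ t, HasDerivAt V (W t) t) (hV0 : ∀ t, 0 ≤ V t)
    (hW : ∀ t, 0 ≤ t → W t ≤ -c₁ * V t ^ ((1:ℝ) - α) - c₂ * V t ^ ((1:ℝ) + α)) :
    ∀ t, 1 / (α * c₂) + 1 / (α * c₁) ≤ t → V t = 0 := by
  set t₁ : ℝ := 1 / (α * c₂) with ht₁def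
  set t₂ : ℝ := 1 / (α * c₁) with ht₂def
  have ht₁ : 0 < t₁ := by positivity
  have ht₂ : 0 < t₂ := by positivity
  set T : ℝ := t₁ + t₂ with hTdef
  have hT0 : 0 < T := by positivity
  have hWle : ∀ t, 0 ≤ t → W t ≤ 0 := by
    intro t ht
    have h1 : (0:ℝ) ≤ c₁ * V t ^ ((1:ℝ) - α) :=
      mul_nonneg hc₁.le (Real.rpow_nonneg (hV0 t) _)
    have h2 : (0:ℝ) ≤ c₂ * V t ^ ((1:ℝ) + α) :=
      mul_nonneg hc₂.le (Real.rpow_nonneg (hV0 t) _)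
    have := hW t ht
    linarith
  have hanti : AntitoneOn V (Set.Ici 0) := by
    apply antitoneOn_of_deriv_nonpos (convex_Ici 0)
    · exact fun x _ => (hd x).continuousAt.continuousWithinAt
    · exact fun x _ => (hd x).differentiableAt.differentiableWithinAt
    · intro x hx
      rw [interior_Ici] at hx
      rw [(hd x).deriv]
      exact hWle x (le_of_lt hx)
  have hVT : V T = 0 := by
    by_contra h
    have hpos : 0 < V T := lt_of_le_of_ne (hV0 T) (Ne.symm h)
    have hposall : ∀ s, 0 ≤ s → s ≤ T → 0 < V s := fun s hs hsT =>
      lt_of_lt_of_le hpos (hanti hs hT0.le hsT)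
    -- Step 1: V t₁ ≤ 1
    have hVt₁ : V t₁ ≤ 1 := by
      set g : ℝ → ℝ := fun s => V s ^ (-α) with hgdef
      set g' : ℝ → ℝ := fun s => W s * (-α) * V s ^ (-α - 1) with hg'def
      have hgd : ∀ s, 0 ≤ s → s ≤ T → HasDerivAt g (g' s) s := fun s hs hsT =>
        (hd s).rpow_const (Or.inl (hposall s hs hsT).ne')
      obtain ⟨c, hc, hslope⟩ := exists_hasDerivAt_eq_slope g g' ht₁
        (fun s hs => (hgd s hs.1 (hs.2.trans (by linarith))).continuousAt.continuousWithinAt)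
        (fun s hs => hgd s hs.1.le (hs.2.le.trans (by linarith)))
      have hc0 : 0 ≤ c := hc.1.le
      have hcT : c ≤ T := by have := hc.2; linarith
      have hVc : 0 < V c := hposall c hc0 hcT
      have hWc : W c ≤ -c₂ * V c ^ ((1:ℝ) + α) := by
        have h1 : (0:ℝ) ≤ c₁ * V c ^ ((1:ℝ) - α) :=
          mul_nonneg hc₁.le (Real.rpow_nonneg (hV0 c) _)
        have := hW c hc0
        linarith
      have hkey : α * c₂ ≤ g' c := by
        have hVpow : (0:ℝ) < V c ^ (-α - 1) := Real.rpow_pos_of_pos hVc _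
        have h5 : α * c₂ * V c ^ ((1:ℝ) + α) * V c ^ (-α - 1) ≤ W c * (-α) * V c ^ (-α - 1) := by
          have ha := mul_le_mul_of_nonneg_right (mul_le_mul_of_nonneg_right
            (show c₂ * V c ^ ((1:ℝ) + α) ≤ -W c by linarith) hα.le) hVpow.le
          linarith
        have h6 : V c ^ ((1:ℝ) + α) * V c ^ (-α - 1) = 1 := by
          rw [← Real.rpow_add hVc]
          have : (1:ℝ) + α + (-α - 1) = 0 := by ring
          rw [this, Real.rpow_zero]
        calc α * c₂ = α * c₂ * (V c ^ ((1:ℝ) + α) * V c ^ (-α - 1)) := by rw [h6]; ring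
          _ = α * c₂ * V c ^ ((1:ℝ) + α) * V c ^ (-α - 1) := by ring
          _ ≤ W c * (-α) * V c ^ (-α - 1) := h5
          _ = g' c := rfl
      have hg0 : 0 < g 0 := Real.rpow_pos_of_pos (hposall 0 le_rfl hT0.le) _
      rw [hslope, sub_zero] at hkey
      have hge : α * c₂ * t₁ ≤ g t₁ - g 0 := (le_div_iff₀ ht₁).mp hkey
      have ht₁eq : α * c₂ * t₁ = 1 := by
        rw [ht₁def]
        field_simp
      by_contra hgt
      push_neg at hgt
      have : g t₁ < 1 := Real.rpow_lt_one_of_one_lt_of_neg hgt (by linarith)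
      linarith
    -- Step 2: contradiction
    set h2f : ℝ → ℝ := fun s => V s ^ α with h2def
    set h2' : ℝ → ℝ := fun s => W s * α * V s ^ (α - 1) with h2'def
    have hhd : ∀ s, 0 ≤ s → s ≤ T → HasDerivAt h2f (h2' s) s := fun s hs hsT =>
      (hd s).rpow_const (Or.inl (hposall s hs hsT).ne')
    have ht₁T : t₁ < T := by linarith
    obtain ⟨c, hc, hslope⟩ := exists_hasDerivAt_eq_slope h2f h2' ht₁T
      (fun s hs => (hhd s (ht₁.le.trans hs.1) hs.2).continuousAt.continuousWithinAt)
      (fun s hs => hhd s (ht₁.le.trans hs.1.le) hs.2.le)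
    have hc0 : 0 ≤ c := ht₁.le.trans hc.1.le
    have hcT : c ≤ T := hc.2.le
    have hVc : 0 < V c := hposall c hc0 hcT
    have hWc : W c ≤ -c₁ * V c ^ ((1:ℝ) - α) := by
      have h1 : (0:ℝ) ≤ c₂ * V c ^ ((1:ℝ) + α) :=
        mul_nonneg hc₂.le (Real.rpow_nonneg (hV0 c) _)
      have := hW c hc0
      linarith
    have hkey : h2' c ≤ -(α * c₁) := by
      have hVpow : (0:ℝ) < V c ^ (α - 1) := Real.rpow_pos_of_pos hVc _
      have h5 : W c * α * V c ^ (α - 1) ≤ -c₁ * V c ^ ((1:ℝ) - α) * α * V c ^ (α - 1) := by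
        have ha := mul_le_mul_of_nonneg_right (mul_le_mul_of_nonneg_right
          (show W c ≤ -c₁ * V c ^ ((1:ℝ) - α) from hWc) hα.le) hVpow.le
        linarith
      have h6 : V c ^ ((1:ℝ) - α) * V c ^ (α - 1) = 1 := by
        rw [← Real.rpow_add hVc]
        have : (1:ℝ) - α + (α - 1) = 0 := by ring
        rw [this, Real.rpow_zero]
      calc h2' c = W c * α * V c ^ (α - 1) := rfl
        _ ≤ -c₁ * V c ^ ((1:ℝ) - α) * α * V c ^ (α - 1) := h5
        _ = -(α * c₁) * (V c ^ ((1:ℝ) - α) * V c ^ (α - 1)) := by ring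
        _ = -(α * c₁) := by rw [h6]; ring
    rw [hslope] at hkey
    have hTt₁ : T - t₁ = t₂ := by ring
    have hle : h2f T - h2f t₁ ≤ -(α * c₁) * (T - t₁) :=
      (div_le_iff₀ (by linarith)).mp hkey
    have ht₂eq : α * c₁ * t₂ = 1 := by
      rw [ht₂def]
      field_simp
    have hft₁ : h2f t₁ ≤ 1 :=
      Real.rpow_le_one (hV0 t₁) hVt₁ hα.le
    have hfT : 0 < h2f T := Real.rpow_pos_of_pos hpos _
    rw [hTt₁] at hle
    nlinarith
  intro t ht
  have ht0 : 0 ≤ t := hT0.le.trans ht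
  have := hanti hT0.le ht0 ht
  rw [hVT] at this
  exact le_antisymm this (hV0 t)

/-- From componentwise power sums to fixed-time convergence of the tracking error:
the settling-time bound depends only on `n, p, q, γ₁, γ₂`, not on the trajectory. -/
theorem stmt_16 (n p q : ℕ) (hp : 0 < p) (hpe : Even p) (hqo : Odd q) (hpq : p < q)
    (γ₁ γ₂ : ℝ) (hγ₁ : 0 < γ₁) (hγ₂ : 0 < γ₂) :
    ∃ C : ℝ, 0 ≤ C ∧
      ∀ (e : ℝ → EuclideanSpace ℝ (Fin n)) (e' : ℝ → EuclideanSpace ℝ (Fin n)),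
        (∀ t, HasDerivAt e (e' t) t) → Continuous e' →
        (∀ t, 0 ≤ t →
          deriv (fun s => (1 / 2) * ‖e s‖ ^ 2) t ≤
            -γ₁ * ∑ i, |e t i| ^ ((2 : ℝ) - (p : ℝ) / q)
            - γ₂ * ∑ i, |e t i| ^ ((2 : ℝ) + (p : ℝ) / q)) →
        (∀ t, 0 ≤ t →
          deriv (fun s => (1 / 2) * ‖e s‖ ^ 2) t ≤
            -(2 : ℝ) ^ ((1 : ℝ) - (p : ℝ) / (2 * q)) * γ₁ *
                ((1 / 2) * ‖e t‖ ^ 2) ^ ((1 : ℝ) - (p : ℝ) / (2 * q))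
            - (2 : ℝ) ^ ((1 : ℝ) + (p : ℝ) / (2 * q)) * (n : ℝ) ^ (-((p : ℝ) / q)) * γ₂ *
                ((1 / 2) * ‖e t‖ ^ 2) ^ ((1 : ℝ) + (p : ℝ) / (2 * q))) ∧
        ∃ T : ℝ, 0 ≤ T ∧ T ≤ C ∧ ∀ t, T ≤ t → e t = 0 := by
  have hq0 : 0 < q := by
    obtain ⟨k, hk⟩ := hqo
    omega
  have hq' : (0:ℝ) < q := by exact_mod_cast hq0
  have hp' : (0:ℝ) < p := by exact_mod_cast hp
  have hpq' : (p:ℝ) ≤ (q:ℝ) := by exact_mod_cast hpq.le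
  set α : ℝ := (p:ℝ) / (2 * q) with hαdef
  have hα0 : 0 < α := by positivity
  have hα2 : α ≤ 1/2 := by
    rw [hαdef, div_le_div_iff₀ (by positivity) (by norm_num)]
    nlinarith
  have hr : (p:ℝ) / q = 2 * α := by
    rw [hαdef]
    field_simp
  set c₁ : ℝ := (2:ℝ) ^ ((1:ℝ) - α) * γ₁ with hc₁def
  set c₂ : ℝ := (2:ℝ) ^ ((1:ℝ) + α) * (n:ℝ) ^ (-(2 * α)) * γ₂ with hc₂def
  have hc₁ : 0 < c₁ := by positivity
  refine ⟨max 0 (1 / (α * c₂) + 1 / (α * c₁)), le_max_left _ _, ?_⟩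
  intro e e' hde hce hyp
  set V : ℝ → ℝ := fun s => (1/2 : ℝ) * ‖e s‖ ^ 2 with hVdef
  set W : ℝ → ℝ := fun t => (1/2 : ℝ) * (2 * (inner ℝ (e t) (e' t) : ℝ)) with hWdef
  have hV : ∀ t, HasDerivAt V (W t) t := fun t =>
    HasDerivAt.const_mul (1/2 : ℝ) (hde t).norm_sq
  have hV0 : ∀ t, 0 ≤ V t := fun t => by positivity
  have part1 : ∀ t, 0 ≤ t →
      deriv (fun s => (1 / 2 : ℝ) * ‖e s‖ ^ 2) t ≤
        -c₁ * V t ^ ((1:ℝ) - α) - c₂ * V t ^ ((1:ℝ) + α) := by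
    intro t ht
    refine (hyp t ht).trans ?_
    rw [hr]
    have hA := part1a' (n := n) α hα0 hα2 (e t)
    have hB := part1b' (n := n) α hα0 hα2 (e t)
    have h1 := mul_le_mul_of_nonneg_left hA hγ₁.le
    have h2 := mul_le_mul_of_nonneg_left hB hγ₂.le
    have h2α : (2:ℝ) - 2 * α = 2 - 2 * α := rfl
    simp only [hVdef, hc₁def, hc₂def]
    have e1 : ∑ i, |e t i| ^ ((2:ℝ) - 2 * α) = ∑ i, |e t i| ^ (2 - 2 * α) := by norm_num
    have e2 : ∑ i, |e t i| ^ ((2:ℝ) + 2 * α) = ∑ i, |e t i| ^ (2 + 2 * α) := by norm_num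
    rw [e1, e2]
    linarith
  have part1' : ∀ t, 0 ≤ t →
      deriv (fun s => (1 / 2 : ℝ) * ‖e s‖ ^ 2) t ≤
        -(2 : ℝ) ^ ((1 : ℝ) - α) * γ₁ * ((1 / 2) * ‖e t‖ ^ 2) ^ ((1 : ℝ) - α)
        - (2 : ℝ) ^ ((1 : ℝ) + α) * (n : ℝ) ^ (-((p : ℝ) / q)) * γ₂ *
            ((1 / 2) * ‖e t‖ ^ 2) ^ ((1 : ℝ) + α) := by
    intro t ht
    have := part1 t ht
    rw [hr]
    simp only [hc₁def, hc₂def, hVdef] at this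
    linarith
  refine ⟨part1', ?_⟩
  rcases Nat.eq_zero_or_pos n with hn | hn
  · refine ⟨0, le_rfl, le_max_left _ _, fun t _ => ?_⟩
    subst hn
    ext i; exact i.elim0
  · have hn' : (0:ℝ) < n := by exact_mod_cast hn
    have hc₂ : 0 < c₂ := by
      have := Real.rpow_pos_of_pos hn' (-(2 * α))
      positivity
    have hW' : ∀ t, 0 ≤ t → W t ≤ -c₁ * V t ^ ((1:ℝ) - α) - c₂ * V t ^ ((1:ℝ) + α) := by
      intro t ht
      have := part1 t ht
      rwa [(hV t).deriv] at this
    have key := fixedTime α c₁ c₂ hα0 hc₁ hc₂ V W hV hV0 hW'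
    refine ⟨1 / (α * c₂) + 1 / (α * c₁), by positivity, le_max_right _ _, fun t ht => ?_⟩
    have hVt : V t = 0 := key t ht
    have h1 : ‖e t‖ ^ 2 = 0 := by
      simp only [hVdef] at hVt
      linarith
    exact norm_eq_zero.mp (pow_eq_zero_iff two_ne_zero |>.mp h1)
end

section
/- Let f : ℝ × ℝ≥0 → ℝ be C² with f_xx(x,t) ≥ m > 0, let A, λ̄ ∈ ℝ, and define e(x,t) = f_x(x,t) + A λ̄. Suppose x(t) solves ẋ = -κ f_xx(x,t)^{-1} ( γ₁ e^{1-p/q} + γ₂ e^{1+p/q} + γ₃ sign(e) ) - f_xx(x,t)^{-1} ( A u(t) + f_xt(x,t) ) with λ̄ constant and κ, γ₁, γ₂, γ₃ > 0, where u is bounded by the feedforward consistency condition A u(t) = -d/dt(A λ̄) = 0. Then along the solution, d/dt [½ e(x(t),t)²] ≤ -κ γ₁ |e|^{2 - p/q} - κ γ₂ |e|^{2 + p/q}, so e reaches 0 within a fixed time independent of x(0). -/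
lemma aux_fx_deriv (f fx fxx fxt : ℝ → ℝ → ℝ)
    (hf : ContDiff ℝ 2 (fun pr : ℝ × ℝ => f pr.1 pr.2))
    (hfx : ∀ x t, HasDerivAt (fun x' => f x' t) (fx x t) x)
    (hfxx : ∀ x t, HasDerivAt (fun x' => fx x' t) (fxx x t) x)
    (hfxt : ∀ x t, HasDerivAt (fun t' => fx x t') (fxt x t) t)
    (y : ℝ → ℝ) (y' t : ℝ) (hy : HasDerivAt y y' t) :
    HasDerivAt (fun s => fx (y s) s) (fxx (y t) t * y' + fxt (y t) t) t := by
  set F : ℝ × ℝ → ℝ := fun pr => f pr.1 pr.2 with hF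
  have hF1 : ContDiff ℝ 1 (fderiv ℝ F) := hf.fderiv_right (by norm_num)
  set G : ℝ × ℝ → ℝ := fun pr => fderiv ℝ F pr (1, 0) with hGdef
  have hG : ContDiff ℝ 1 G := hF1.clm_apply contDiff_const
  have hGeq : ∀ a b : ℝ, G (a, b) = fx a b := by
    intro a b
    have hc : HasDerivAt (fun a' : ℝ => ((a', b) : ℝ × ℝ)) (1, 0) a :=
      (hasDerivAt_id a).prodMk (hasDerivAt_const a b)
    have hFd : HasFDerivAt F (fderiv ℝ F (a, b)) (a, b) :=
      (hf.differentiable (by norm_num) (a, b)).hasFDerivAt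
    have h2 : HasDerivAt (fun a' : ℝ => F (a', b)) (fderiv ℝ F (a, b) (1, 0)) a :=
      hFd.comp_hasDerivAt (l := F) a hc
    exact h2.unique (hfx a b)
  -- full derivative of G at (y t, t)
  have hGd : HasFDerivAt G (fderiv ℝ G (y t, t)) (y t, t) :=
    (hG.differentiable one_ne_zero (y t, t)).hasFDerivAt
  set L := fderiv ℝ G (y t, t) with hL
  have hL1 : L (1, 0) = fxx (y t) t := by
    have hc : HasDerivAt (fun a' : ℝ => ((a', t) : ℝ × ℝ)) (1, 0) (y t) :=
      (hasDerivAt_id (y t)).prodMk (hasDerivAt_const (y t) t)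
    have h2 : HasDerivAt (fun a' : ℝ => G (a', t)) (L (1, 0)) (y t) :=
      hGd.comp_hasDerivAt (l := G) (y t) hc
    have h3 : (fun a' : ℝ => G (a', t)) = fun a' => fx a' t :=
      funext fun a' => hGeq a' t
    rw [h3] at h2
    exact h2.unique (hfxx (y t) t)
  have hL2 : L (0, 1) = fxt (y t) t := by
    have hc : HasDerivAt (fun b' : ℝ => ((y t, b') : ℝ × ℝ)) (0, 1) t :=
      (hasDerivAt_const t (y t)).prodMk (hasDerivAt_id t)
    have h2 : HasDerivAt (fun b' : ℝ => G (y t, b')) (L (0, 1)) t :=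
      hGd.comp_hasDerivAt (l := G) t hc
    have h3 : (fun b' : ℝ => G (y t, b')) = fun b' => fx (y t) b' :=
      funext fun b' => hGeq (y t) b'
    rw [h3] at h2
    exact h2.unique (hfxt (y t) t)
  have hc : HasDerivAt (fun s => ((y s, s) : ℝ × ℝ)) (y', 1) t :=
    hy.prodMk (hasDerivAt_id t)
  have h2 : HasDerivAt (fun s => G (y s, s)) (L (y', 1)) t :=
    HasFDerivAt.comp_hasDerivAt (f := fun s => ((y s, s) : ℝ × ℝ)) t hGd hc
  have h3 : (fun s => G (y s, s)) = fun s => fx (y s) s :=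
    funext fun s => hGeq (y s) s
  rw [h3] at h2
  have h4 : L (y', 1) = fxx (y t) t * y' + fxt (y t) t := by
    have : ((y', 1) : ℝ × ℝ) = y' • ((1, 0) : ℝ × ℝ) + (0, 1) := by
      simp [Prod.ext_iff]
    rw [this, map_add, map_smul, hL1, hL2]
    simp [smul_eq_mul]
    ring
  rwa [h4] at h2

lemma aux_mul_sign (z : ℝ) : z * Real.sign z = |z| := by
  rcases lt_trichotomy z 0 with h | h | h
  · rw [Real.sign_of_neg h, abs_of_neg h]; ring
  · simp [h]
  · rw [Real.sign_of_pos h, abs_of_pos h]; ring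

lemma aux_mul_opow (z α : ℝ) (hα : 0 < 1 + α) :
    z * (Real.sign z * |z| ^ α) = |z| ^ (1 + α) := by
  rcases eq_or_ne z 0 with h | h
  · simp [h, Real.zero_rpow hα.ne']
  · have hz : (0:ℝ) < |z| := abs_pos.mpr h
    rw [show z * (Real.sign z * |z| ^ α) = z * Real.sign z * |z| ^ α by ring,
      aux_mul_sign, Real.rpow_add hz, Real.rpow_one]

lemma aux_pow_ineq (w r : ℝ) (hw : 0 ≤ w) (hr0 : 0 < r) (hr1 : r < 1) :
    (1 + w) ^ (1 + r) ≤ 4 * (1 + w ^ (1 + r)) := by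
  have h1r : (0:ℝ) < 1 + r := by linarith
  have h2 : (2:ℝ) ^ (1 + r) ≤ 4 := by
    calc (2:ℝ) ^ (1 + r) ≤ (2:ℝ) ^ (2:ℝ) :=
          Real.rpow_le_rpow_of_exponent_le (by norm_num) (by linarith)
      _ = 4 := by
          rw [show (2:ℝ) = ((2:ℕ):ℝ) by norm_num, Real.rpow_natCast]; norm_num
  rcases le_total w 1 with h | h
  · have : (1 + w) ^ (1 + r) ≤ (2:ℝ) ^ (1 + r) :=
      Real.rpow_le_rpow (by linarith) (by linarith) h1r.le
    have hwp : 0 ≤ w ^ (1 + r) := Real.rpow_nonneg hw _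
    linarith
  · have h1 : (1 + w) ^ (1 + r) ≤ (2 * w) ^ (1 + r) :=
      Real.rpow_le_rpow (by linarith) (by linarith) h1r.le
    have h2' : (2 * w) ^ (1 + r) = 2 ^ (1 + r) * w ^ (1 + r) :=
      Real.mul_rpow (by norm_num) hw
    have hwp : 0 ≤ w ^ (1 + r) := Real.rpow_nonneg hw _
    have : 2 ^ (1 + r) * w ^ (1 + r) ≤ 4 * w ^ (1 + r) :=
      mul_le_mul_of_nonneg_right h2 hwp
    nlinarith


/-- Single-agent fixed-time tracking: along the feedback-feedforward dynamics the
stationarity error obeys a fixed-time differential inequality, and it vanishes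
within a time bounded independently of the initial condition `x 0`. -/
theorem stmt_17 (f : ℝ → ℝ → ℝ)
    (hf : ContDiff ℝ 2 (fun pr : ℝ × ℝ => f pr.1 pr.2))
    (fx fxx fxt : ℝ → ℝ → ℝ)
    (hfx : ∀ x t, HasDerivAt (fun x' => f x' t) (fx x t) x)
    (hfxx : ∀ x t, HasDerivAt (fun x' => fx x' t) (fxx x t) x)
    (hfxt : ∀ x t, HasDerivAt (fun t' => fx x t') (fxt x t) t)
    (m : ℝ) (hm : 0 < m) (hstrong : ∀ x t, m ≤ fxx x t)
    (A lam : ℝ) (κ γ₁ γ₂ γ₃ : ℝ) (hκ : 0 < κ) (hγ₁ : 0 < γ₁) (hγ₂ : 0 < γ₂) (hγ₃ : 0 < γ₃)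
    (p q : ℕ) (hp : 0 < p) (hpe : Even p) (hqo : Odd q) (hpq : p < q)
    (opow : ℝ → ℝ → ℝ) (hopow : ∀ z α, opow z α = Real.sign z * |z| ^ α)
    (e : ℝ → ℝ → ℝ) (he : ∀ x t, e x t = fx x t + A * lam) :
    ∃ C : ℝ, 0 ≤ C ∧
      ∀ (x u : ℝ → ℝ), Continuous u → (∀ t, A * u t = 0) →
        (∀ t, HasDerivAt x
          (-κ * (fxx (x t) t)⁻¹ *
              (γ₁ * opow (e (x t) t) (1 - (p : ℝ) / q)
                + γ₂ * opow (e (x t) t) (1 + (p : ℝ) / q)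
                + γ₃ * Real.sign (e (x t) t))
            - (fxx (x t) t)⁻¹ * (A * u t + fxt (x t) t)) t) →
        (∀ t, 0 ≤ t →
          deriv (fun s => (1 / 2) * (e (x s) s) ^ 2) t ≤
            -κ * γ₁ * |e (x t) t| ^ ((2 : ℝ) - (p : ℝ) / q)
            - κ * γ₂ * |e (x t) t| ^ ((2 : ℝ) + (p : ℝ) / q)) ∧
        ∃ T : ℝ, 0 ≤ T ∧ T ≤ C ∧ ∀ t, T ≤ t → e (x t) t = 0 := by
  have hq0 : 0 < q := lt_trans hp hpq
  set r : ℝ := (p : ℝ) / q with hrdef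
  have hr0 : 0 < r := div_pos (by exact_mod_cast hp) (by exact_mod_cast hq0)
  have hr1 : r < 1 := (div_lt_one (by exact_mod_cast hq0)).mpr (by exact_mod_cast hpq)
  set δ : ℝ := min γ₂ γ₃ with hδdef
  have hδ : 0 < δ := lt_min hγ₂ hγ₃
  set C : ℝ := 4 / (r * κ * δ) with hCdef
  have hC0 : 0 < C := by positivity
  refine ⟨C, hC0.le, ?_⟩
  intro x u hu hAu hx
  have hfxxpos : ∀ a b, 0 < fxx a b := fun a b => lt_of_lt_of_le hm (hstrong a b)
  set E : ℝ → ℝ := fun s => e (x s) s with hEdef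
  have hExt : ∀ s, e (x s) s = E s := fun s => by rw [hEdef]
  set E' : ℝ → ℝ := fun t =>
    -κ * (γ₁ * opow (E t) (1 - r) + γ₂ * opow (E t) (1 + r) + γ₃ * Real.sign (E t))
    with hE'def
  -- derivative of the error along the flow
  have hE : ∀ t, HasDerivAt E (E' t) t := by
    intro t
    have h1 := aux_fx_deriv f fx fxx fxt hf hfx hfxx hfxt x _ t (hx t)
    have h2 : HasDerivAt E
        (fxx (x t) t * (-κ * (fxx (x t) t)⁻¹ *
              (γ₁ * opow (e (x t) t) (1 - r)
                + γ₂ * opow (e (x t) t) (1 + r)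
                + γ₃ * Real.sign (e (x t) t))
            - (fxx (x t) t)⁻¹ * (A * u t + fxt (x t) t)) + fxt (x t) t) t := by
      have hfun : E = fun s => fx (x s) s + A * lam := by
        funext s; rw [hEdef]; exact he (x s) s
      rw [hfun]; exact h1.add_const _
    have hne : fxx (x t) t ≠ 0 := (hfxxpos _ _).ne'
    have hA0 := hAu t
    have hinv : fxx (x t) t * (fxx (x t) t)⁻¹ = 1 := mul_inv_cancel₀ hne
    convert h2 using 1
    simp only [hE'def, hExt]
    linear_combination (κ * (γ₁ * opow (E t) (1 - r) + γ₂ * opow (E t) (1 + r)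
        + γ₃ * Real.sign (E t)) + A * u t + fxt (x t) t) * hinv + hA0
  -- derivative of the half-square
  have hsq : ∀ t, HasDerivAt (fun s => (1 / 2 : ℝ) * (E s) ^ 2) (E t * E' t) t := by
    intro t
    have h := ((hE t).pow 2).const_mul (1 / 2 : ℝ)
    refine h.congr_deriv ?_
    push_cast
    ring
  have hEE' : ∀ t, E t * E' t =
      -κ * γ₁ * |E t| ^ ((2 : ℝ) - r) - κ * γ₂ * |E t| ^ ((2 : ℝ) + r) - κ * γ₃ * |E t| := by
    intro t
    simp only [hE'def]
    rw [hopow, hopow]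
    rw [show (2 : ℝ) - r = 1 + (1 - r) by ring, show (2 : ℝ) + r = 1 + (1 + r) by ring]
    rw [← aux_mul_opow (E t) (1 - r) (by linarith), ← aux_mul_opow (E t) (1 + r) (by linarith),
      ← aux_mul_sign (E t)]
    ring
  have hEE'le : ∀ t, E t * E' t ≤
      -κ * γ₁ * |E t| ^ ((2 : ℝ) - r) - κ * γ₂ * |E t| ^ ((2 : ℝ) + r) := by
    intro t
    rw [hEE' t]
    have : 0 ≤ κ * γ₃ * |E t| := by positivity
    linarith
  constructor
  · -- Part A: the differential inequality
    intro t ht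
    simp only [hExt]
    have := (hsq t).deriv
    rw [show (fun s => (1 / 2 : ℝ) * E s ^ 2) = fun s => 1 / 2 * E s ^ 2 by rfl] at this
    rw [this]
    exact hEE'le t
  · -- Part B: fixed-time convergence
    have hEE'np : ∀ t, E t * E' t ≤ 0 := by
      intro t
      have h1 : 0 ≤ κ * γ₁ * |E t| ^ ((2 : ℝ) - r) := by positivity
      have h2 : 0 ≤ κ * γ₂ * |E t| ^ ((2 : ℝ) + r) := by positivity
      linarith [hEE'le t]
    have hsq2 : ∀ t, HasDerivAt (fun s => (E s) ^ 2) (2 * (E t * E' t)) t := by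
      intro t
      have h := (hE t).pow 2
      refine h.congr_deriv ?_
      push_cast
      ring
    have hmono : Antitone (fun s => (E s) ^ 2) := by
      apply antitone_of_deriv_nonpos
      · exact fun t => (hsq2 t).differentiableAt
      · intro t
        rw [(hsq2 t).deriv]
        linarith [hEE'np t]
    have hEcont : Continuous E := by
      have : Differentiable ℝ E := fun t => (hE t).differentiableAt
      exact this.continuous
    -- there is a zero of E in [0, C]
    have hzero : ∃ t₀ ∈ Set.Icc (0 : ℝ) C, E t₀ = 0 := by
      by_contra hno
      push_neg at hno
      set σ : ℝ := if 0 < E 0 then 1 else -1 with hσdef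
      have hσ1 : σ = 1 ∨ σ = -1 := by
        rw [hσdef]; split <;> simp
      have hσsq : σ * σ = 1 := by rcases hσ1 with h | h <;> rw [h] <;> norm_num
      have hσ0 : 0 < σ * E 0 := by
        have hne0 : E 0 ≠ 0 := hno 0 ⟨le_refl 0, hC0.le⟩
        rw [hσdef]; split
        · rename_i hpos; simpa using hpos
        · rename_i hnp
          have : E 0 < 0 := lt_of_le_of_ne (not_lt.mp hnp) hne0
          nlinarith
      have hpos : ∀ t ∈ Set.Icc (0 : ℝ) C, 0 < σ * E t := by
        intro t ht
        by_contra hle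
        push_neg at hle
        have hcs : ContinuousOn (fun s => σ * E s) (Set.Icc 0 t) :=
          (continuous_const.mul hEcont).continuousOn
        have h0mem : (0 : ℝ) ∈ Set.Icc (σ * E t) (σ * E 0) := ⟨hle, hσ0.le⟩
        obtain ⟨s, hs, hs0⟩ := intermediate_value_Icc' ht.1 hcs h0mem
        have hsC : s ∈ Set.Icc (0 : ℝ) C := ⟨hs.1, le_trans hs.2 ht.2⟩
        have hs0' : σ * E s = 0 := hs0
        have hEs : E s = 0 := by
          rcases hσ1 with h | h <;> rw [h] at hs0' <;> linarith
        exact hno s hsC hEs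
      have hsgn : ∀ t ∈ Set.Icc (0 : ℝ) C, Real.sign (E t) = σ := by
        intro t ht
        rcases hσ1 with h | h
        · rw [h]
          have := hpos t ht; rw [h] at this
          exact Real.sign_of_pos (by linarith)
        · rw [h]
          have := hpos t ht; rw [h] at this
          exact Real.sign_of_neg (by linarith)
      set W : ℝ → ℝ := fun s => σ * E s with hWdef
      have hWext : ∀ s, σ * E s = W s := fun s => by rw [hWdef]
      have hWpos : ∀ t ∈ Set.Icc (0 : ℝ) C, 0 < W t := by
        intro t ht; rw [← hWext]; exact hpos t ht
      have habs : ∀ t ∈ Set.Icc (0 : ℝ) C, |E t| = W t := by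
        intro t ht
        rcases hσ1 with h | h
        · have := hpos t ht; rw [h] at this
          rw [← hWext, h, abs_of_pos (by linarith)]; ring
        · have := hpos t ht; rw [h] at this
          rw [← hWext, h, abs_of_neg (by linarith)]; ring
      -- σ E' as a clean function of W
      have hW' : ∀ t ∈ Set.Icc (0 : ℝ) C, σ * E' t =
          -κ * (γ₁ * (W t) ^ (1 - r) + γ₂ * (W t) ^ (1 + r) + γ₃) := by
        intro t ht
        simp only [hE'def]
        rw [hopow, hopow, hsgn t ht, habs t ht]
        linear_combination (-(κ * (γ₁ * (W t) ^ (1 - r) + γ₂ * (W t) ^ (1 + r) + γ₃))) * hσsq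
      -- the Lyapunov-like clock function
      set h : ℝ → ℝ := fun s => C * (1 - (1 + W s) ^ (-r)) + s with hhdef
      have hhd : ∀ t ∈ Set.Icc (0 : ℝ) C,
          HasDerivAt h (C * (-((-r * (1 + W t) ^ (-r - 1)) * (σ * E' t))) + 1) t := by
        intro t ht
        have hWd : HasDerivAt W (σ * E' t) t := (hE t).const_mul σ
        have h1W : HasDerivAt (fun s => 1 + W s) (σ * E' t) t := hWd.const_add 1
        have h1p : (0 : ℝ) < 1 + W t := by linarith [hWpos t ht]
        have hrp : HasDerivAt (fun y : ℝ => y ^ (-r)) (-r * (1 + W t) ^ (-r - 1)) (1 + W t) :=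
          Real.hasDerivAt_rpow_const (Or.inl h1p.ne')
        have hcomp : HasDerivAt (fun s => (1 + W s) ^ (-r))
            ((-r * (1 + W t) ^ (-r - 1)) * (σ * E' t)) t := hrp.comp (h₂ := fun y : ℝ => y ^ (-r)) t h1W
        have hsub : HasDerivAt (fun s => 1 - (1 + W s) ^ (-r))
            (-((-r * (1 + W t) ^ (-r - 1)) * (σ * E' t))) t := hcomp.const_sub 1
        have := (hsub.const_mul C).add (hasDerivAt_id t)
        exact this
      have hderneg : ∀ t ∈ Set.Icc (0 : ℝ) C,
          C * (-((-r * (1 + W t) ^ (-r - 1)) * (σ * E' t))) + 1 ≤ 0 := by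
        intro t ht
        set w : ℝ := W t with hwdef
        have hw : 0 < w := hWpos t ht
        have hB : (0 : ℝ) < (1 + w) ^ (1 + r) := Real.rpow_pos_of_pos (by linarith) _
        have hinv : (1 + w) ^ (-r - 1) = ((1 + w) ^ (1 + r))⁻¹ := by
          rw [show -r - 1 = -(1 + r) by ring, Real.rpow_neg (by linarith)]
        have hE'le : σ * E' t ≤ -(κ * (γ₂ * w ^ (1 + r) + γ₃)) := by
          rw [hW' t ht]
          have : 0 ≤ κ * (γ₁ * w ^ (1 - r)) := by positivity
          nlinarith [Real.rpow_nonneg hw.le (1 - r)]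
        -- key comparison: C * r * κ * (γ₂ w^{1+r} + γ₃) ≥ (1+w)^{1+r}
        have hkey : (1 + w) ^ (1 + r) ≤ C * r * κ * (γ₂ * w ^ (1 + r) + γ₃) := by
          have hCrκ : C * r * κ = 4 / δ := by
            rw [hCdef]; field_simp
          rw [hCrκ]
          have h1 : δ ≤ γ₂ := min_le_left _ _
          have h2 : δ ≤ γ₃ := min_le_right _ _
          have h3 : (1 + w) ^ (1 + r) ≤ 4 * (1 + w ^ (1 + r)) :=
            aux_pow_ineq w r hw.le hr0 hr1
          have h4 : 4 * (1 + w ^ (1 + r)) ≤ 4 / δ * (γ₂ * w ^ (1 + r) + γ₃) := by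
            rw [div_mul_eq_mul_div, le_div_iff₀ hδ]
            have hwp : 0 ≤ w ^ (1 + r) := Real.rpow_nonneg hw.le _
            nlinarith
          linarith
        -- conclude
        have hfac : 0 < C * r * ((1 + w) ^ (1 + r))⁻¹ := by positivity
        have : C * (-((-r * (1 + w) ^ (-r - 1)) * (σ * E' t)))
            = C * r * ((1 + w) ^ (1 + r))⁻¹ * (σ * E' t) := by
          rw [hinv]; ring
        rw [this]
        have h5 : C * r * ((1 + w) ^ (1 + r))⁻¹ * (σ * E' t)
            ≤ C * r * ((1 + w) ^ (1 + r))⁻¹ * (-(κ * (γ₂ * w ^ (1 + r) + γ₃))) :=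
          mul_le_mul_of_nonneg_left hE'le hfac.le
        have h6 : C * r * ((1 + w) ^ (1 + r))⁻¹ * (-(κ * (γ₂ * w ^ (1 + r) + γ₃))) ≤ -1 := by
          rw [show C * r * ((1 + w) ^ (1 + r))⁻¹ * (-(κ * (γ₂ * w ^ (1 + r) + γ₃)))
              = -(C * r * κ * (γ₂ * w ^ (1 + r) + γ₃) / ((1 + w) ^ (1 + r))) by ring]
          rw [neg_le_neg_iff, le_div_iff₀ hB]
          linarith
        linarith
      have hanti : AntitoneOn h (Set.Icc (0 : ℝ) C) := by
        apply antitoneOn_of_deriv_nonpos (convex_Icc 0 C)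
        · intro t ht
          exact ((hhd t ht).continuousAt).continuousWithinAt
        · intro t ht
          rw [interior_Icc] at ht
          exact ((hhd t (Set.Ioo_subset_Icc_self ht)).differentiableAt).differentiableWithinAt
        · intro t ht
          rw [interior_Icc] at ht
          have ht' := Set.Ioo_subset_Icc_self ht
          rw [(hhd t ht').deriv]
          exact hderneg t ht'
      have hmem0 : (0 : ℝ) ∈ Set.Icc (0 : ℝ) C := ⟨le_refl 0, hC0.le⟩
      have hmemC : C ∈ Set.Icc (0 : ℝ) C := ⟨hC0.le, le_refl C⟩
      have hCle := hanti hmem0 hmemC hC0.le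
      rw [hhdef] at hCle
      simp only at hCle
      have hu0 : 0 < (1 + W 0) ^ (-r) :=
        Real.rpow_pos_of_pos (by linarith [hWpos 0 hmem0]) _
      have huC : (1 + W C) ^ (-r) ≤ 1 :=
        Real.rpow_le_one_of_one_le_of_nonpos (by linarith [hWpos C hmemC]) (by linarith)
      nlinarith
    obtain ⟨t₀, ht₀, hEt₀⟩ := hzero
    refine ⟨t₀, ht₀.1, ht₀.2, ?_⟩
    intro t ht
    have h1 : (E t) ^ 2 ≤ (E t₀) ^ 2 := hmono ht
    rw [hEt₀] at h1
    simp only [ne_eq, OfNat.ofNat_ne_zero, not_false_eq_true, zero_pow] at h1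
    have h2 : (E t) ^ 2 = 0 := le_antisymm h1 (sq_nonneg _)
    rw [hExt t]
    exact (pow_eq_zero_iff (by norm_num : (2:ℕ) ≠ 0)).mp h2
end
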